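/- Let ψ be a Ma-Minda function that extends to a continuous injective map on the closed unit disk. Let f(z) = z + Σ_{k≥2} a_k z^k ∈ 𝒜 with f'(z) ≠ 0 for z ∈ 𝔻. If for every t ∈ [0, 2π) one has Σ_{k=2}^∞ k · |(k − ψ(e^{it}))/(1 − ψ(e^{it}))| · |a_k| ≤ 1, then f ∈ C(ψ). -/

import Mathlib

open Complex Metric Set

noncomputable section

/-- The open unit disk in `ℂ`. -/
def 𝔻 : Set ℂ := Metric.ball 0 1

/-- The class `𝒜` of analytic functions on `𝔻` normalized by `f 0 = 0`, `f' 0 = 1`. -/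
def IsClassA (f : ℂ → ℂ) : Prop :=
  DifferentiableOn ℂ f 𝔻 ∧ f 0 = 0 ∧ deriv f 0 = 1

/-- `g` is subordinate to `F` on the unit disk. -/
def Subordinate (g F : ℂ → ℂ) : Prop :=
  ∃ ω : ℂ → ℂ, DifferentiableOn ℂ ω 𝔻 ∧ ω 0 = 0 ∧ (∀ z ∈ 𝔻, ω z ∈ 𝔻) ∧
    ∀ z ∈ 𝔻, g z = F (ω z)

/-- `ψ` is a Ma-Minda function: analytic and univalent on `𝔻`, `Re ψ > 0`, `ψ 0 = 1`,
`ψ' 0 > 0`, with real Taylor coefficients (expressed via `ψ (conj z) = conj (ψ z)`). -/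
def MaMinda (ψ : ℂ → ℂ) : Prop :=
  DifferentiableOn ℂ ψ 𝔻 ∧ Set.InjOn ψ 𝔻 ∧ (∀ z ∈ 𝔻, 0 < (ψ z).re) ∧
    ψ 0 = 1 ∧ 0 < (deriv ψ 0).re ∧ (deriv ψ 0).im = 0 ∧
    (∀ z ∈ 𝔻, ψ (starRingEnd ℂ z) = starRingEnd ℂ (ψ z))

/-- The Ma-Minda starlike class `S*(ψ)`. -/
def StarlikeMM (ψ f : ℂ → ℂ) : Prop :=
  IsClassA f ∧ (∀ z ∈ 𝔻, z ≠ 0 → f z ≠ 0) ∧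
    Subordinate (fun z => if z = 0 then 1 else z * deriv f z / f z) ψ

/-- The Ma-Minda convex class `C(ψ)`. -/
def ConvexMM (ψ f : ℂ → ℂ) : Prop :=
  IsClassA f ∧ (∀ z ∈ 𝔻, deriv f z ≠ 0) ∧
    Subordinate (fun z => 1 + z * deriv (deriv f) z / deriv f z) ψ

/-- `f` is starlike of order `α`. -/
def StarlikeOrder (α : ℝ) (f : ℂ → ℂ) : Prop :=
  IsClassA f ∧ (∀ z ∈ 𝔻, z ≠ 0 → f z ≠ 0) ∧
    ∀ z ∈ 𝔻, z ≠ 0 → α < (z * deriv f z / f z).re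

/-- `f` is a (normalized) convex function on `𝔻`. -/
def IsConvexFn (f : ℂ → ℂ) : Prop :=
  IsClassA f ∧ (∀ z ∈ 𝔻, deriv f z ≠ 0) ∧
    ∀ z ∈ 𝔻, 0 < (1 + z * deriv (deriv f) z / deriv f z).re


/-!
Put `w = ψ(u)` for `|u| = 1` and `g = 1 + z f''/f'`. Multiplying `g(z) = w` by `f'(z)` and
expanding in powers of `z` gives
`z f''(z) - (w - 1) f'(z) = (1 - w) + ∑_{k ≥ 2} k (k - w) a_k z^{k-1}`,
and the coefficient condition bounds the sum by `|z| |1 - w| < |1 - w|`; so `g` never takes a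
value on `ψ(∂𝔻)`. Since `ψ` is a homeomorphism of the closed disk onto its image, the boundary of
`ψ(𝔻)` lies in `ψ(∂𝔻)`, and the connected set `g(𝔻)`, which contains `g(0) = 1 = ψ(0)`, stays inside
`ψ(𝔻)`. Then `ω = ψ⁻¹ ∘ g` is the Schwarz function: the inverse of the injective holomorphic `ψ`
is holomorphic where `ψ' ≠ 0`, and the isolated zeros of `ψ'` are removable singularities.
-/

open Complex Metric Set Filter Function Topology

section InverseFunction

variable {U : Set ℂ} {ψ : ℂ → ℂ}

theorem isOpen_image_of_deriv_ne_zero (hU : IsOpen U) (hUc : IsPreconnected U)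
    (hψ : DifferentiableOn ℂ ψ U) {c : ℂ} (hc : c ∈ U) (hψc : deriv ψ c ≠ 0)
    {s : Set ℂ} (hsU : s ⊆ U) (hs : IsOpen s) : IsOpen (ψ '' s) := by
  rcases (hψ.analyticOnNhd hU).is_constant_or_isOpen hUc with ⟨w, hw⟩ | h
  · have hconst : ψ =ᶠ[𝓝 c] fun _ => w := (hU.eventually_mem hc).mono hw
    exact absurd (by simpa using hconst.deriv_eq) hψc
  · exact h s hsU hs

theorem continuousAt_invFunOn (hU : IsOpen U) (hUc : IsPreconnected U)
    (hψ : DifferentiableOn ℂ ψ U) (hinj : InjOn ψ U) {c : ℂ} (hc : c ∈ U)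
    (hψc : deriv ψ c ≠ 0) {z : ℂ} (hz : z ∈ U) : ContinuousAt (invFunOn ψ U) (ψ z) := by
  rw [ContinuousAt, hinj.leftInvOn_invFunOn hz, _root_.tendsto_nhds]
  intro s hs hzs
  refine mem_of_superset ((isOpen_image_of_deriv_ne_zero hU hUc hψ hc hψc inter_subset_right
    (hs.inter hU)).mem_nhds ⟨z, ⟨hzs, hz⟩, rfl⟩) ?_
  rintro _ ⟨y, ⟨hys, hyU⟩, rfl⟩
  rwa [mem_preimage, hinj.leftInvOn_invFunOn hyU]

theorem differentiableAt_invFunOn_of_deriv_ne_zero (hU : IsOpen U)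
    (hψ : DifferentiableOn ℂ ψ U) (hinj : InjOn ψ U) {z : ℂ} (hz : z ∈ U)
    (hψz : deriv ψ z ≠ 0) : DifferentiableAt ℂ (invFunOn ψ U) (ψ z) := by
  have hstrict : HasStrictDerivAt ψ (deriv ψ z) z :=
    (hψ.analyticOnNhd hU z hz).hasStrictDerivAt
  have hleft : ∀ᶠ x in 𝓝 z, invFunOn ψ U (ψ x) = x :=
    (hU.eventually_mem hz).mono fun x hx => hinj.leftInvOn_invFunOn hx
  exact (hstrict.to_local_left_inverse hψz hleft).hasDerivAt.differentiableAt

theorem eventually_deriv_ne_zero (hU : IsOpen U) (hUc : IsPreconnected U)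
    (hψ : DifferentiableOn ℂ ψ U) {c : ℂ} (hc : c ∈ U) (hψc : deriv ψ c ≠ 0) {z : ℂ}
    (hz : z ∈ U) : ∀ᶠ x in 𝓝[≠] z, deriv ψ x ≠ 0 := by
  have hψ' : AnalyticOnNhd ℂ (deriv ψ) U := (hψ.analyticOnNhd hU).deriv
  refine (hψ' z hz).eventually_eq_zero_or_eventually_ne_zero.resolve_left fun hzero => hψc ?_
  exact hψ'.eqOn_zero_of_preconnected_of_eventuallyEq_zero hUc hz hzero hc

theorem tendsto_invFunOn_nhdsNE (hU : IsOpen U) (hUc : IsPreconnected U)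
    (hψ : DifferentiableOn ℂ ψ U) (hinj : InjOn ψ U) {c : ℂ} (hc : c ∈ U)
    (hψc : deriv ψ c ≠ 0) {z : ℂ} (hz : z ∈ U) :
    Tendsto (invFunOn ψ U) (𝓝[≠] (ψ z)) (𝓝[≠] z) := by
  have hcont := continuousAt_invFunOn hU hUc hψ hinj hc hψc hz
  rw [ContinuousAt, hinj.leftInvOn_invFunOn hz] at hcont
  refine tendsto_nhdsWithin_iff.2 ⟨hcont.mono_left nhdsWithin_le_nhds, ?_⟩
  have himage : ψ '' U ∈ 𝓝 (ψ z) :=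
    (isOpen_image_of_deriv_ne_zero hU hUc hψ hc hψc subset_rfl hU).mem_nhds (mem_image_of_mem ψ hz)
  filter_upwards [nhdsWithin_le_nhds himage, self_mem_nhdsWithin] with w hw hwz hinv
  exact hwz ((invFunOn_eq hw).symm.trans (congrArg ψ hinv))

/-- The zeros of `ψ'` are isolated, and at them `ψ⁻¹` is continuous, hence holomorphic by
Riemann's removable singularity theorem. -/
theorem differentiableOn_invFunOn (hU : IsOpen U) (hUc : IsPreconnected U)
    (hψ : DifferentiableOn ℂ ψ U) (hinj : InjOn ψ U) {c : ℂ} (hc : c ∈ U)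
    (hψc : deriv ψ c ≠ 0) : DifferentiableOn ℂ (invFunOn ψ U) (ψ '' U) := by
  rintro _ ⟨z, hz, rfl⟩
  have himage : ψ '' U ∈ 𝓝 (ψ z) :=
    (isOpen_image_of_deriv_ne_zero hU hUc hψ hc hψc subset_rfl hU).mem_nhds (mem_image_of_mem ψ hz)
  have hpunct : ∀ᶠ w in 𝓝[≠] ψ z, DifferentiableAt ℂ (invFunOn ψ U) w := by
    filter_upwards [(tendsto_invFunOn_nhdsNE hU hUc hψ hinj hc hψc hz).eventually
      (eventually_deriv_ne_zero hU hUc hψ hc hψc hz), nhdsWithin_le_nhds himage]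
      with w hw ⟨y, hy, hyw⟩
    subst hyw
    rw [hinj.leftInvOn_invFunOn hy] at hw
    exact differentiableAt_invFunOn_of_deriv_ne_zero hU hψ hinj hy hw
  exact (analyticAt_of_differentiable_on_punctured_nhds_of_continuousAt hpunct
    (continuousAt_invFunOn hU hUc hψ hinj hc hψc hz)).differentiableAt.differentiableWithinAt

end InverseFunction

theorem subordinate_of_mapsTo_image {g ψ : ℂ → ℂ} (hg : DifferentiableOn ℂ g 𝔻)
    (hψ : DifferentiableOn ℂ ψ 𝔻) (hinj : InjOn ψ 𝔻) (hψ0 : deriv ψ 0 ≠ 0) (hg0 : g 0 = ψ 0)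
    (hgψ : MapsTo g 𝔻 (ψ '' 𝔻)) : Subordinate g ψ := by
  have h0 : (0 : ℂ) ∈ 𝔻 := mem_ball_self one_pos
  refine ⟨invFunOn ψ 𝔻 ∘ g, ?_, ?_, fun z hz => invFunOn_mem (hgψ hz),
    fun z hz => (invFunOn_eq (hgψ hz)).symm⟩
  · exact (differentiableOn_invFunOn isOpen_ball (convex_ball 0 1).isPreconnected hψ hinj h0
      hψ0).comp hg hgψ
  · rw [comp_apply, hg0, hinj.leftInvOn_invFunOn h0]

theorem mapsTo_image_ball_of_forall_ne {g ψ : ℂ → ℂ} (hg : ContinuousOn g 𝔻)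
    (hψ : ContinuousOn ψ (closedBall 0 1)) (hopen : IsOpen (ψ '' 𝔻)) (hg0 : g 0 = ψ 0)
    (hne : ∀ z ∈ 𝔻, ∀ u ∈ sphere (0 : ℂ) 1, g z ≠ ψ u) : MapsTo g 𝔻 (ψ '' 𝔻) := by
  have h0 : (0 : ℂ) ∈ 𝔻 := mem_ball_self one_pos
  have hclosure : closure (ψ '' 𝔻) ⊆ ψ '' closedBall 0 1 :=
    closure_minimal (image_mono ball_subset_closedBall)
      ((isCompact_closedBall 0 1).image_of_continuousOn hψ).isClosed
  refine mapsTo_iff_image_subset.2 <| ((convex_ball (0 : ℂ) 1).isPreconnected.image g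
    hg).subset_of_closure_inter_subset hopen ⟨g 0, mem_image_of_mem g h0, 0, h0, hg0.symm⟩ ?_
  rintro _ ⟨hcl, z, hz, rfl⟩
  obtain ⟨u, hu, hgu⟩ := hclosure hcl
  rcases (mem_closedBall_zero_iff.1 hu).lt_or_eq with hlt | heq
  · exact ⟨u, mem_ball_zero_iff.2 hlt, hgu⟩
  · exact absurd hgu.symm (hne z hz u (mem_sphere_zero_iff_norm.2 heq))

theorem exists_mem_Ico_exp_I_mul_eq {u : ℂ} (hu : ‖u‖ = 1) :
    ∃ t ∈ Ico 0 (2 * Real.pi), exp (I * t) = u := by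
  have hper : Periodic (fun t : ℝ => exp (t * I)) (2 * Real.pi) := fun t => by
    simpa using exp_mul_I_periodic t
  obtain ⟨t, ht, heq⟩ := hper.exists_mem_Ico₀ Real.two_pi_pos (arg u)
  refine ⟨t, ht, ?_⟩
  have hu' := norm_mul_exp_arg_mul_I u
  rw [hu, ofReal_one, one_mul] at hu'
  rw [mul_comm, ← hu']
  exact heq.symm

section PowerSeries

theorem hasSum_deriv_of_hasSum_pow {c : ℕ → ℂ} {F : ℂ → ℂ}
    (hc : Summable fun k : ℕ => (k : ℝ) * ‖c k‖) (hF : ∀ z ∈ 𝔻, HasSum (fun k => c k * z ^ k) (F z))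
    {z : ℂ} (hz : z ∈ 𝔻) :
    HasSum (fun k => ((k + 1 : ℕ) : ℂ) * c (k + 1) * z ^ k) (deriv F z) := by
  have hbound : ∀ (k : ℕ) y, y ∈ 𝔻 → ‖c k * (k * y ^ (k - 1))‖ ≤ k * ‖c k‖ := by
    intro k y hy
    rw [norm_mul, norm_mul, norm_pow, Complex.norm_natCast, ← mul_assoc, mul_comm ‖c k‖]
    exact mul_le_of_le_one_right (by positivity)
      (pow_le_one₀ (norm_nonneg y) (mem_ball_zero_iff.1 hy).le)
  have hderiv := hasDerivAt_tsum_of_isPreconnected hc isOpen_ball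
    (convex_ball 0 1).isPreconnected (fun k y _ => (hasDerivAt_pow k y).const_mul (c k))
    hbound hz (hF z hz).summable hz
  have hF' : deriv F z = ∑' k, c k * (k * z ^ (k - 1)) := by
    refine (hderiv.congr_of_eventuallyEq ?_).deriv
    filter_upwards [isOpen_ball.eventually_mem hz] with y hy using (hF y hy).tsum_eq.symm
  have hsum := ((hasSum_nat_add_iff' 1).2
    (Summable.of_norm_bounded hc fun k => hbound k z hz).hasSum)
  have hterm : ∀ k : ℕ, c (k + 1) * (((k + 1 : ℕ) : ℂ) * z ^ (k + 1 - 1)) =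
      ((k + 1 : ℕ) : ℂ) * c (k + 1) * z ^ k := fun k => by
    rw [Nat.add_sub_cancel]; ring
  simpa only [Finset.range_one, Finset.sum_singleton, CharP.cast_eq_zero, zero_mul, mul_zero,
    sub_zero, ← hF', hterm] using hsum

theorem hasSum_deriv_deriv_of_hasSum_pow {a : ℕ → ℂ} {F : ℂ → ℂ}
    (ha : Summable fun k : ℕ => (k : ℝ) ^ 2 * ‖a k‖)
    (hF : ∀ z ∈ 𝔻, HasSum (fun k => a k * z ^ k) (F z)) {z : ℂ} (hz : z ∈ 𝔻) :
    HasSum (fun k => ((k + 1 : ℕ) : ℂ) * a (k + 1) * z ^ k) (deriv F z) ∧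
      HasSum (fun k => ((k + 1 : ℕ) : ℂ) * (((k + 2 : ℕ) : ℂ) * a (k + 2)) * z ^ k)
        (deriv (deriv F) z) := by
  have ha1 : Summable fun k : ℕ => (k : ℝ) * ‖a k‖ :=
    ha.of_nonneg_of_le (fun k => by positivity) fun k =>
      mul_le_mul_of_nonneg_right (by exact_mod_cast Nat.le_self_pow two_ne_zero k) (norm_nonneg _)
  have ha2 : Summable fun k : ℕ => (k : ℝ) * ‖((k + 1 : ℕ) : ℂ) * a (k + 1)‖ := by
    refine ((summable_nat_add_iff 1).2 ha).of_nonneg_of_le (fun k => by positivity) fun k => ?_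
    rw [norm_mul, Complex.norm_natCast, ← mul_assoc, sq]
    gcongr
    exact_mod_cast k.le_succ
  have hF' : ∀ y ∈ 𝔻, HasSum (fun k => ((k + 1 : ℕ) : ℂ) * a (k + 1) * y ^ k) (deriv F y) :=
    fun y hy => hasSum_deriv_of_hasSum_pow ha1 hF hy
  exact ⟨hF' z hz, hasSum_deriv_of_hasSum_pow ha2 hF' hz⟩

end PowerSeries

section CoefficientCondition

/-- The hypothesis of the theorem at the boundary value `w = ψ (exp (I * t))`. -/
def CoeffCondition (a : ℕ → ℂ) (w : ℂ) : Prop :=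
  (Summable fun k : ℕ => ((k + 2 : ℕ) : ℝ) * ‖(((k + 2 : ℕ) : ℂ) - w) / (1 - w)‖ * ‖a (k + 2)‖) ∧
    ∑' k : ℕ, ((k + 2 : ℕ) : ℝ) * ‖(((k + 2 : ℕ) : ℂ) - w) / (1 - w)‖ * ‖a (k + 2)‖ ≤ 1

variable {a : ℕ → ℂ} {w : ℂ}

theorem CoeffCondition.summable_sq_mul_norm (hw : w ≠ 1) (h : CoeffCondition a w) :
    Summable fun k : ℕ => (k : ℝ) ^ 2 * ‖a k‖ := by
  have hw' : 0 < ‖1 - w‖ := norm_pos_iff.2 (sub_ne_zero.2 hw.symm)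
  rw [← summable_nat_add_iff 2]
  refine Summable.of_norm_bounded_eventually_nat (h.1.mul_left (2 * ‖1 - w‖))
    (eventually_atTop.2 ⟨⌈2 * ‖w‖⌉₊, fun k hk => ?_⟩)
  have hk' : 2 * ‖w‖ ≤ k := Nat.ceil_le.1 hk
  have hhalf : ((k + 2 : ℕ) : ℝ) ≤ 2 * ‖((k + 2 : ℕ) : ℂ) - w‖ := by
    have := norm_sub_norm_le ((k + 2 : ℕ) : ℂ) w
    rw [Complex.norm_natCast] at this
    push_cast at this ⊢
    linarith
  rw [Real.norm_of_nonneg (by positivity), norm_div, sq]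
  calc ((k + 2 : ℕ) : ℝ) * ((k + 2 : ℕ) : ℝ) * ‖a (k + 2)‖
      ≤ ((k + 2 : ℕ) : ℝ) * (2 * ‖((k + 2 : ℕ) : ℂ) - w‖) * ‖a (k + 2)‖ := by gcongr
    _ = 2 * ‖1 - w‖ * (((k + 2 : ℕ) : ℝ) * (‖((k + 2 : ℕ) : ℂ) - w‖ / ‖1 - w‖) *
          ‖a (k + 2)‖) := by field_simp

theorem hasSum_mul_sub_mul (ha1 : a 1 = 1) {z P Q : ℂ}
    (hP : HasSum (fun k => ((k + 1 : ℕ) : ℂ) * a (k + 1) * z ^ k) P)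
    (hQ : HasSum (fun k => ((k + 1 : ℕ) : ℂ) * (((k + 2 : ℕ) : ℂ) * a (k + 2)) * z ^ k) Q) :
    HasSum (fun k => ((k + 2 : ℕ) : ℂ) * (((k + 2 : ℕ) : ℂ) - w) * a (k + 2) * z ^ (k + 1))
      (z * Q - (w - 1) * P - (1 - w)) := by
  have hP' := (hasSum_nat_add_iff' 1).2 hP
  simp only [Finset.range_one, Finset.sum_singleton, ha1, zero_add, pow_zero, Nat.cast_one,
    mul_one] at hP'
  have hsum := (hQ.mul_left z).sub (hP'.mul_left (w - 1))
  have hterm : ∀ k : ℕ, z * (((k + 1 : ℕ) : ℂ) * (((k + 2 : ℕ) : ℂ) * a (k + 2)) * z ^ k) -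
      (w - 1) * (((k + 1 + 1 : ℕ) : ℂ) * a (k + 1 + 1) * z ^ (k + 1)) =
      ((k + 2 : ℕ) : ℂ) * (((k + 2 : ℕ) : ℂ) - w) * a (k + 2) * z ^ (k + 1) := fun k => by
    push_cast; ring
  rw [show z * Q - (w - 1) * P - (1 - w) = z * Q - (w - 1) * (P - 1) by ring]
  simpa only [hterm] using hsum

theorem CoeffCondition.mul_ne_mul (h : CoeffCondition a w) (ha1 : a 1 = 1) (hw : w ≠ 1)
    {z P Q : ℂ} (hz : ‖z‖ < 1)
    (hP : HasSum (fun k => ((k + 1 : ℕ) : ℂ) * a (k + 1) * z ^ k) P)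
    (hQ : HasSum (fun k => ((k + 1 : ℕ) : ℂ) * (((k + 2 : ℕ) : ℂ) * a (k + 2)) * z ^ k) Q) :
    z * Q ≠ (w - 1) * P := by
  have hw' : 0 < ‖1 - w‖ := norm_pos_iff.2 (sub_ne_zero.2 hw.symm)
  have hbound : ∀ k : ℕ,
      ‖((k + 2 : ℕ) : ℂ) * (((k + 2 : ℕ) : ℂ) - w) * a (k + 2) * z ^ (k + 1)‖ ≤
        ‖z‖ * ‖1 - w‖ * (((k + 2 : ℕ) : ℝ) * ‖(((k + 2 : ℕ) : ℂ) - w) / (1 - w)‖ *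
          ‖a (k + 2)‖) := by
    intro k
    have hzk : ‖z‖ ^ (k + 1) ≤ ‖z‖ :=
      pow_le_of_le_one (norm_nonneg z) hz.le k.succ_ne_zero
    rw [norm_mul, norm_mul, norm_mul, norm_pow, norm_div, Complex.norm_natCast]
    calc _ ≤ ((k + 2 : ℕ) : ℝ) * ‖((k + 2 : ℕ) : ℂ) - w‖ * ‖a (k + 2)‖ * ‖z‖ := by gcongr
      _ = _ := by field_simp
  have hnorm := (hasSum_mul_sub_mul ha1 hP hQ).norm_le_of_bounded
    (h.1.hasSum.mul_left (‖z‖ * ‖1 - w‖)) hbound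
  intro heq
  rw [heq, sub_self, zero_sub, norm_neg] at hnorm
  have : ‖z‖ * ‖1 - w‖ * ∑' k : ℕ, ((k + 2 : ℕ) : ℝ) * ‖(((k + 2 : ℕ) : ℂ) - w) / (1 - w)‖ *
      ‖a (k + 2)‖ < ‖1 - w‖ :=
    (mul_le_of_le_one_right (by positivity) h.2).trans_lt (mul_lt_of_lt_one_left hw' hz)
  linarith

theorem one_add_mul_deriv_deriv_div_deriv_ne {f : ℂ → ℂ} (ha1 : a 1 = 1)
    (hrep : ∀ z ∈ 𝔻, HasSum (fun k => a k * z ^ k) (f z)) (hf' : ∀ z ∈ 𝔻, deriv f z ≠ 0)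
    (h : CoeffCondition a w) (hw : w ≠ 1) {z : ℂ} (hz : z ∈ 𝔻) :
    1 + z * deriv (deriv f) z / deriv f z ≠ w := by
  intro heq
  obtain ⟨hP, hQ⟩ := hasSum_deriv_deriv_of_hasSum_pow (h.summable_sq_mul_norm hw) hrep hz
  apply h.mul_ne_mul ha1 hw (mem_ball_zero_iff.1 hz) hP hQ
  rw [← heq]
  field_simp [hf' z hz]
  ring

end CoefficientCondition

theorem stmt6_general (ψ f : ℂ → ℂ) (a : ℕ → ℂ) (hψ : MaMinda ψ)
    (hψc : ContinuousOn ψ (Metric.closedBall 0 1))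
    (hψi : Set.InjOn ψ (Metric.closedBall 0 1))
    (hf : IsClassA f) (ha1 : a 1 = 1)
    (hrep : ∀ z ∈ 𝔻, HasSum (fun k => a k * z ^ k) (f z))
    (hf' : ∀ z ∈ 𝔻, deriv f z ≠ 0)
    (hcoef : ∀ t ∈ Set.Ico (0:ℝ) (2*Real.pi),
      Summable (fun k : ℕ => ((k+2:ℕ):ℝ) *
        ‖(((k+2 : ℕ) : ℂ) - ψ (Complex.exp (Complex.I*t))) /
          (1 - ψ (Complex.exp (Complex.I*t)))‖ * ‖a (k+2)‖) ∧
      ∑' k : ℕ, ((k+2:ℕ):ℝ) *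
        ‖(((k+2 : ℕ) : ℂ) - ψ (Complex.exp (Complex.I*t))) /
          (1 - ψ (Complex.exp (Complex.I*t)))‖ * ‖a (k+2)‖ ≤ 1) :
    ConvexMM ψ f := by
  obtain ⟨hψd, -, -, hψ0, hre, -, -⟩ := hψ
  have hψ'0 : deriv ψ 0 ≠ 0 := fun h => by simp [h] at hre
  have hψinj : InjOn ψ 𝔻 := hψi.mono ball_subset_closedBall
  have hψ1 : ∀ u ∈ sphere (0 : ℂ) 1, ψ u ≠ 1 := fun u hu h =>
    ne_of_mem_sphere hu one_ne_zero <| hψi (sphere_subset_closedBall hu)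
      (mem_closedBall_self zero_le_one) (h.trans hψ0.symm)
  have hcoef' : ∀ u ∈ sphere (0 : ℂ) 1, CoeffCondition a (ψ u) := fun u hu => by
    obtain ⟨t, ht, rfl⟩ := exists_mem_Ico_exp_I_mul_eq (mem_sphere_zero_iff_norm.1 hu)
    exact hcoef t ht
  have hfa : AnalyticOnNhd ℂ f 𝔻 := hf.1.analyticOnNhd isOpen_ball
  have hg : DifferentiableOn ℂ (fun z => 1 + z * deriv (deriv f) z / deriv f z) 𝔻 :=
    (differentiableOn_const 1).add <| (differentiableOn_id.mul hfa.deriv.deriv.differentiableOn).div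
      hfa.deriv.differentiableOn hf'
  have hne : ∀ z ∈ 𝔻, ∀ u ∈ sphere (0 : ℂ) 1, 1 + z * deriv (deriv f) z / deriv f z ≠ ψ u :=
    fun z hz u hu => one_add_mul_deriv_deriv_div_deriv_ne ha1 hrep hf' (hcoef' u hu)
      (hψ1 u hu) hz
  have hopen : IsOpen (ψ '' 𝔻) := isOpen_image_of_deriv_ne_zero isOpen_ball
    (convex_ball 0 1).isPreconnected hψd (mem_ball_self one_pos) hψ'0 subset_rfl isOpen_ball
  refine ⟨hf, hf', subordinate_of_mapsTo_image hg hψd hψinj hψ'0 (by simp [hψ0]) ?_⟩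
  exact mapsTo_image_ball_of_forall_ne hg.continuousOn hψc hopen (by simp [hψ0]) hne

theorem stmt6 (ψ f : ℂ → ℂ) (a : ℕ → ℂ) (hψ : MaMinda ψ)
    (hψc : ContinuousOn ψ (Metric.closedBall 0 1))
    (hψi : Set.InjOn ψ (Metric.closedBall 0 1))
    (hf : IsClassA f) (ha0 : a 0 = 0) (ha1 : a 1 = 1)
    (hrep : ∀ z ∈ 𝔻, HasSum (fun k => a k * z ^ k) (f z))
    (hf' : ∀ z ∈ 𝔻, deriv f z ≠ 0)
    (hcoef : ∀ t ∈ Set.Ico (0:ℝ) (2*Real.pi),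
      Summable (fun k : ℕ => ((k+2:ℕ):ℝ) *
        ‖(((k+2 : ℕ) : ℂ) - ψ (Complex.exp (Complex.I*t))) /
          (1 - ψ (Complex.exp (Complex.I*t)))‖ * ‖a (k+2)‖) ∧
      ∑' k : ℕ, ((k+2:ℕ):ℝ) *
        ‖(((k+2 : ℕ) : ℂ) - ψ (Complex.exp (Complex.I*t))) /
          (1 - ψ (Complex.exp (Complex.I*t)))‖ * ‖a (k+2)‖ ≤ 1) :
    ConvexMM ψ f :=
  stmt6_general ψ f a hψ hψc hψi hf ha1 hrep hf' hcoef
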